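/- arXiv:1709.04854 — 2 statements merged into one kernel-verified Lean document; each statement's English description precedes it below -/
import Mathlib

section
/- The disturbance update r' of a sound ranking r is sound and refines r, i.e., dom(r') ⊇ dom(r), r'(v) ≤ r(v) for all v ∈ dom(r), and r'(v) = 0 iff v ∈ W_1(G). -/
namespace GamesWithDisturbances

/-- An arena with unmodeled disturbances: vertices of Player 0, normal edges `E`,
disturbance edges `D`. -/
structure Arena (V : Type*) where
  V0 : Set V
  E : V → V → Prop
  D : V → V → Prop

/-- A game with disturbances: an arena together with a winning condition on
infinite vertex sequences. -/
structure Game (V : Type*) where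
  arena : Arena V
  Win : (ℕ → V) → Prop

variable {V M : Type*}

/-- A play: an infinite sequence of (vertex, disturbance bit). -/
abbrev Play (V : Type*) := ℕ → V × Bool

/-- A legal play: the first bit is 0, and each step uses a normal edge (bit 0)
or a disturbance edge (bit 1). -/
def IsPlay (A : Arena V) (ρ : Play V) : Prop :=
  (ρ 0).2 = false ∧
    ∀ j, if (ρ (j + 1)).2 = true then A.D (ρ j).1 (ρ (j + 1)).1
         else A.E (ρ j).1 (ρ (j + 1)).1

/-- A strategy maps (strict history, current vertex) to the next vertex. -/
abbrev Strategy (V : Type*) := List V → V → V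

/-- The strict history of a play before position `j`. -/
def hist (ρ : Play V) (j : ℕ) : List V := (List.range j).map fun i => (ρ i).1

/-- A play is consistent with a Player 0 strategy: at Player 0 vertices, if no
disturbance occurs, the next vertex is the one prescribed by the strategy. -/
def ConsistentWith (A : Arena V) (σ : Strategy V) (ρ : Play V) : Prop :=
  ∀ j, (ρ j).1 ∈ A.V0 → (ρ (j + 1)).2 = false →
    (ρ (j + 1)).1 = σ (hist ρ j) (ρ j).1

/-- A play is consistent with a Player 1 strategy. -/
def ConsistentWith1 (A : Arena V) (τ : Strategy V) (ρ : Play V) : Prop :=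
  ∀ j, (ρ j).1 ∉ A.V0 → (ρ (j + 1)).1 = τ (hist ρ j) (ρ j).1

/-- The number of disturbances of a play, an element of ℕ∞. -/
noncomputable def numDist (ρ : Play V) : ℕ∞ := {j | (ρ j).2 = true}.encard

/-- The vertex sequence of a play. -/
def playSeq (ρ : Play V) : ℕ → V := fun j => (ρ j).1

/-- The ordinal ω + 2 = {0, 1, 2, ..., ω, ω + 1}: finite values are naturals,
ω is `↑(⊤ : ℕ∞)`, and ω + 1 is `⊤`. -/
abbrev Res : Type := WithTop ℕ∞

/-- A strategy `σ` is `α`-resilient from `v` if every play starting in `v`,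
consistent with `σ`, with fewer than `α` disturbances, is winning for Player 0. -/
def Resilient (G : Game V) (σ : Strategy V) (α : Res) (v : V) : Prop :=
  ∀ ρ : Play V, IsPlay G.arena ρ → ConsistentWith G.arena σ ρ → (ρ 0).1 = v →
    (numDist ρ : Res) < α → G.Win (playSeq ρ)

/-- The resilience of a vertex. -/
noncomputable def resilience (G : Game V) (v : V) : Res :=
  sSup {α : Res | ∃ σ : Strategy V, Resilient G σ α v}

/-- Classical (disturbance-free) winning for Player 0 from `v`. -/
def WinningFrom (G : Game V) (σ : Strategy V) (v : V) : Prop :=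
  ∀ ρ : Play V, IsPlay G.arena ρ → ConsistentWith G.arena σ ρ → (ρ 0).1 = v →
    numDist ρ = 0 → G.Win (playSeq ρ)

/-- Classical (disturbance-free) winning for Player 1 from `v`. -/
def WinningFrom1 (G : Game V) (τ : Strategy V) (v : V) : Prop :=
  ∀ ρ : Play V, IsPlay G.arena ρ → ConsistentWith1 G.arena τ ρ → (ρ 0).1 = v →
    numDist ρ = 0 → ¬ G.Win (playSeq ρ)

/-- The winning region of Player 0 (disturbance-free semantics). -/
def W0 (G : Game V) : Set V := {v | ∃ σ, WinningFrom G σ v}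

/-- The winning region of Player 1 (disturbance-free semantics). -/
def W1 (G : Game V) : Set V := {v | ∃ τ, WinningFrom1 G τ v}

/-- A game is determined if every vertex is in one of the winning regions. -/
def Determined (G : Game V) : Prop := ∀ v, v ∈ W0 G ∨ v ∈ W1 G

/-- Prefix-independence of the winning condition. -/
def PrefixIndependent (G : Game V) : Prop :=
  ∀ (π : ℕ → V) (k : ℕ), G.Win π ↔ G.Win fun j => π (j + k)

/-- A strategy is positional if it only depends on the current vertex. -/
def Positional (σ : Strategy V) : Prop := ∀ h h' v, σ h v = σ h' v

/-! ## Rankings and updates -/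

/-- A ranking: a partial map from vertices to ℕ. -/
def Ranking (V : Type*) := V → Option ℕ

/-- A ranking is sound if it assigns 0 exactly to Player 1's winning region. -/
def Sound (G : Game V) (r : Ranking V) : Prop := ∀ v, r v = some 0 ↔ v ∈ W1 G

/-- `r'` refines `r`: the domain grows and values do not increase. -/
def Refines (r r' : Ranking V) : Prop :=
  ∀ v n, r v = some n → ∃ m, r' v = some m ∧ m ≤ n

/-- The set over which the disturbance update minimizes. -/
def distSet (A : Arena V) (r : Ranking V) (v : V) : Set ℕ :=
  {n | r v = some n} ∪ {n | ∃ v' m, A.D v v' ∧ r v' = some m ∧ n = m + 1}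

/-- `r'` is the disturbance update of `r`. -/
def IsDistUpdate (A : Arena V) (r r' : Ranking V) : Prop :=
  ∀ v n, r' v = some n ↔ IsLeast (distSet A r v) n

/-- The game with winning condition `Win ∩ Safety(U)`. -/
def safetyGame (G : Game V) (U : Set V) : Game V :=
  ⟨G.arena, fun π => G.Win π ∧ ∀ j, π j ∉ U⟩

/-- The set over which the risk update minimizes: `k` in the image of `r` such
that Player 1 wins `(A, Win ∩ Safety({v | r v ≤ k}))` from `v`. -/
def riskSet (G : Game V) (r : Ranking V) (v : V) : Set ℕ :=
  {k | (∃ u, r u = some k) ∧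
    v ∈ W1 (safetyGame G {w | ∃ m, m ≤ k ∧ r w = some m})}

/-- `r'` is the risk update of `r`. -/
def IsRiskUpdate (G : Game V) (r r' : Ranking V) : Prop :=
  ∀ v n, r' v = some n ↔ IsLeast (riskSet G r v) n

/-- The iterated sequence of rankings: `r 0` maps exactly `W1 G` to 0, and one
alternates disturbance updates (producing odd-indexed rankings) and risk
updates (producing even-indexed rankings). -/
def IsRankingSeq (G : Game V) (r : ℕ → Ranking V) : Prop :=
  (∀ v, (r 0 v = some 0 ↔ v ∈ W1 G) ∧ ∀ n, r 0 v = some n → n = 0) ∧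
  ∀ j, (Even j → IsDistUpdate G.arena (r j) (r (j + 1))) ∧
       (Odd j → IsRiskUpdate G (r j) (r (j + 1)))

/-! ## The rigged game -/

/-- The arena of the rigged game: Player 1 controls the original vertices
(`Sum.inl`), where he may simulate a disturbance edge or, at Player 0 vertices,
yield control by moving to the copy (`Sum.inr`); from a copy, Player 0 takes a
normal edge. There are no disturbance edges. -/
def riggedArena (A : Arena V) : Arena (V ⊕ V) where
  V0 := {x | ∃ v, x = Sum.inr v}
  E := fun x y =>
    match x, y with
    | Sum.inl v, Sum.inl v' => A.D v v' ∨ (v ∉ A.V0 ∧ A.E v v')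
    | Sum.inl v, Sum.inr v' => v ∈ A.V0 ∧ v' = v
    | Sum.inr v, Sum.inl v' => v ∈ A.V0 ∧ A.E v v'
    | Sum.inr _, Sum.inr _ => False
  D := fun _ _ => False

/-- The rigged winning condition: the sequence obtained by erasing the copy
vertices (via the homomorphism `h`) satisfies `Win`. `f` enumerates, in order,
exactly the positions carrying original vertices. -/
def riggedWin (G : Game V) (π : ℕ → V ⊕ V) : Prop :=
  ∃ (f : ℕ → ℕ) (π' : ℕ → V), StrictMono f ∧
    (∀ j, π (f j) = Sum.inl (π' j)) ∧
    (∀ k, (∀ j, k ≠ f j) → ∃ v, π k = Sum.inr v) ∧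
    G.Win π'

/-- The rigged game of `G`. -/
def rigged (G : Game V) : Game (V ⊕ V) := ⟨riggedArena G.arena, riggedWin G⟩

/-! ## Memory structures and game reductions -/

/-- A memory structure. -/
structure MemoryStructure (V M : Type*) where
  init : V → M
  upd : M → V → M

/-- The product arena `A × M`. -/
def prodArena (A : Arena V) (Mem : MemoryStructure V M) : Arena (V × M) where
  V0 := {p | p.1 ∈ A.V0}
  E := fun p q => A.E p.1 q.1 ∧ Mem.upd p.2 q.1 = q.2
  D := fun p q => A.D p.1 q.1 ∧ Mem.upd p.2 q.1 = q.2

/-- The memory state sequence along a vertex sequence. -/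
def memSeq (Mem : MemoryStructure V M) (π : ℕ → V) : ℕ → M
  | 0 => Mem.init (π 0)
  | j + 1 => Mem.upd (memSeq Mem π j) (π (j + 1))

/-- The extended play of a play in the product arena. -/
def extPlay (Mem : MemoryStructure V M) (ρ : Play V) : Play (V × M) :=
  fun j => (((ρ j).1, memSeq Mem (playSeq ρ) j), (ρ j).2)

/-- `G ≤_M G'`: `G'` is played on the product arena and every play of `G` is
won by the same player as its extension in `G'`. -/
def Reduction (G : Game V) (Mem : MemoryStructure V M) (G' : Game (V × M)) : Prop :=
  G'.arena = prodArena G.arena Mem ∧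
  ∀ ρ : Play V, IsPlay G.arena ρ →
    (G.Win (playSeq ρ) ↔ G'.Win (playSeq (extPlay Mem ρ)))

/-- The finite-state strategy implemented by a memory structure and a
next-move function. -/
def implementedBy (Mem : MemoryStructure V M) (Nxt : V → M → V) : Strategy V :=
  fun h v => Nxt v (match h with
    | [] => Mem.init v
    | w :: ws => (ws ++ [v]).foldl Mem.upd (Mem.init w))

/-! ## Subgames -/

/-- The pure safety game on the arena of `G` with unsafe set `U`. -/
def pureSafety (G : Game V) (U : Set V) : Game V :=
  ⟨G.arena, fun π => ∀ j, π j ∉ U⟩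

/-- The subgame `(A \ W, Win ∩ (V \ W)^ω)` obtained by removing `W`. -/
def subGame (G : Game V) (W : Set V) : Game {v : V // v ∉ W} where
  arena := ⟨{v | v.1 ∈ G.arena.V0}, fun v w => G.arena.E v.1 w.1,
    fun v w => G.arena.D v.1 w.1⟩
  Win := fun π => G.Win fun j => (π j).1

/-- The disturbance update `r'` of a sound ranking `r` is sound and
refines `r`. -/
theorem distUpdate_sound_and_refines {V : Type*} (G : Game V) (r r' : Ranking V)
    (hsound : Sound G r) (hupd : IsDistUpdate G.arena r r') :
    Sound G r' ∧ Refines r r' := by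
  constructor
  · intro v
    rw [hupd v 0]
    constructor
    · rintro ⟨h0, -⟩
      rcases h0 with h | ⟨v', m, -, -, hm⟩
      · exact (hsound v).mp h
      · omega
    · intro hv
      refine ⟨Or.inl ((hsound v).mpr hv), fun n _ => Nat.zero_le n⟩
  · intro v n hn
    have hne : (distSet G.arena r v).Nonempty := ⟨n, Or.inl hn⟩
    refine ⟨sInf (distSet G.arena r v), ?_, Nat.sInf_le (Or.inl hn)⟩
    exact (hupd v _).mpr ⟨Nat.sInf_mem hne, fun m hm => Nat.sInf_le hm⟩

end GamesWithDisturbances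
end

section
/- The risk update r' of a sound ranking r is sound and refines r. -/
namespace GamesWithDisturbances

variable {V M : Type*}

/-! ### Auxiliary lemmas for Statement 6 -/

lemma mem_W1_safety_of_mem {G : Game V} {U : Set V} {v : V} (hv : v ∈ U) :
    v ∈ W1 (safetyGame G U) := by
  refine ⟨fun _ w => w, fun ρ _ _ h0 _ hw => ?_⟩
  exact hw.2 0 (by simpa [playSeq, h0] using hv)

lemma hist_length (ρ : Play V) (j : ℕ) : (hist ρ j).length = j := by simp [hist]

lemma hist_getD (ρ : Play V) {i j : ℕ} (h : i ≤ j) :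
    (hist ρ j ++ [(ρ j).1]).getD i (ρ j).1 = (ρ i).1 := by
  rcases lt_or_eq_of_le h with h | h
  · have hl : i < (hist ρ j).length := by simpa [hist_length] using h
    rw [List.getD_append _ _ _ _ hl, List.getD_eq_getElem _ _ hl]
    simp [hist]
  · subst h
    rw [List.getD_append_right _ _ _ _ (by simp [hist_length])]
    simp [hist_length]

lemma hist_drop (ρ : Play V) (i j : ℕ) :
    (hist ρ (j + i)).drop i = hist (fun l => ρ (l + i)) j := by
  rw [hist, hist, Nat.add_comm j i, List.range_add, List.map_append,
    List.drop_left' (by simp)]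
  simp [Nat.add_comm]

open Classical in
/-- A choice of a winning Player 1 strategy from `u` (arbitrary if none). -/
noncomputable def wstrat (G : Game V) (u : V) : Strategy V :=
  if hu : u ∈ W1 G then hu.choose else fun _ x => x

lemma wstrat_spec {G : Game V} {u : V} (hu : u ∈ W1 G) :
    WinningFrom1 G (wstrat G u) u := by
  rw [wstrat, dif_pos hu]; exact hu.choose_spec

open Classical in
/-- The stitched strategy: play `τ₀` until the play has visited `W1 G`, then
switch to a winning strategy from the first visited vertex of `W1 G`. -/
noncomputable def stitched (G : Game V) (τ₀ : Strategy V) : Strategy V :=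
  fun h w =>
    if hc : ∃ i, i ≤ h.length ∧ (h ++ [w]).getD i w ∈ W1 G then
      wstrat G ((h ++ [w]).getD (Nat.find hc) w) (h.drop (Nat.find hc)) w
    else τ₀ h w

open Classical in
lemma stitched_eq {G : Game V} (τ₀ : Strategy V) (h : List V) (w : V) (i : ℕ)
    (hi : i ≤ h.length) (hw : (h ++ [w]).getD i w ∈ W1 G)
    (hmin : ∀ l < i, (h ++ [w]).getD l w ∉ W1 G) :
    stitched G τ₀ h w = wstrat G ((h ++ [w]).getD i w) (h.drop i) w := by
  have hc : ∃ i, i ≤ h.length ∧ (h ++ [w]).getD i w ∈ W1 G := ⟨i, hi, hw⟩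
  rw [stitched, dif_pos hc]
  have hfi : Nat.find hc = i := by
    rw [Nat.find_eq_iff]
    exact ⟨⟨hi, hw⟩, fun l hl hQl => hmin l hl hQl.2⟩
  rw [hfi]

open Classical in
lemma stitched_eq_of_not {G : Game V} (τ₀ : Strategy V) (h : List V) (w : V)
    (hn : ∀ i ≤ h.length, (h ++ [w]).getD i w ∉ W1 G) :
    stitched G τ₀ h w = τ₀ h w := by
  rw [stitched, dif_neg]
  push_neg
  exact hn

lemma noDist_bits {ρ : Play V} (hnd : numDist ρ = 0) : ∀ j, (ρ j).2 = false := by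
  rw [numDist, Set.encard_eq_zero] at hnd
  intro j
  have := Set.eq_empty_iff_forall_notMem.mp hnd j
  simpa using this

/-- Player 1's winning region in the safety game with unsafe set `W1 G` is
contained in `W1 G`. -/
lemma W1_safety_subset (G : Game V) (hpi : PrefixIndependent G) :
    W1 (safetyGame G (W1 G)) ⊆ W1 G := by
  classical
  rintro v ⟨τ₀, hτ₀⟩
  refine ⟨stitched G τ₀, fun ρ hplay hcons h0 hnd => ?_⟩
  have hbits := noDist_bits hnd
  have hQ : ∀ j i, i ≤ j →
      (hist ρ j ++ [(ρ j).1]).getD i (ρ j).1 = (ρ i).1 := fun j i h => hist_getD ρ h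
  by_cases hB : ∃ j, (ρ j).1 ∈ W1 G
  · -- the play visits W1 G: switch point
    set i := Nat.find hB with hidef
    have hu : (ρ i).1 ∈ W1 G := Nat.find_spec hB
    have hmin : ∀ l < i, (ρ l).1 ∉ W1 G := fun l hl => Nat.find_min hB hl
    set ρ' : Play V := fun j => ρ (j + i) with hρ'
    have hplay' : IsPlay G.arena ρ' := by
      constructor
      · simpa [hρ'] using hbits i
      · intro j
        have := hplay.2 (j + i)
        simpa [hρ', Nat.add_right_comm j i 1] using this
    have hnd' : numDist ρ' = 0 := by
      rw [numDist, Set.encard_eq_zero]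
      ext j
      simp [hρ', hbits]
    have hcons' : ConsistentWith1 G.arena (wstrat G ((ρ i).1)) ρ' := by
      intro j hj
      have hc := hcons (j + i) hj
      have hlen : i ≤ (hist ρ (j + i)).length := by
        simp [hist_length]
      have hst := stitched_eq (G := G) τ₀ (hist ρ (j + i)) ((ρ (j + i)).1) i hlen
        (by rw [hQ (j + i) i (Nat.le_add_left i j)]; exact hu)
        (fun l hl => by
          rw [hQ (j + i) l (le_trans hl.le (Nat.le_add_left i j))]
          exact hmin l hl)
      rw [hst] at hc
      rw [hQ (j + i) i (Nat.le_add_left i j), hist_drop] at hc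
      have : (ρ (j + i + 1)).1 = (ρ' (j + 1)).1 := by
        simp [hρ', Nat.add_right_comm j i 1]
      rw [this] at hc
      exact hc
    have hτu := wstrat_spec hu ρ' hplay' hcons' (by simp [hρ']) hnd'
    intro hWin
    exact hτu ((hpi (playSeq ρ) i).mp hWin)
  · -- the play never visits W1 G: it follows τ₀
    push_neg at hB
    have hcons0 : ConsistentWith1 G.arena τ₀ ρ := by
      intro j hj
      have hc := hcons j hj
      rwa [stitched_eq_of_not τ₀ (hist ρ j) ((ρ j).1)
        (fun i hi => by
          rw [hQ j i (by simpa [hist_length] using hi)]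
          exact hB i)] at hc
    have := hτ₀ ρ hplay hcons0 h0 hnd
    intro hWin
    exact this ⟨hWin, fun j => hB j⟩

/-- The risk update `r'` of a sound ranking `r` is sound and
refines `r`. -/
theorem riskUpdate_sound_and_refines {V : Type*} (G : Game V)
    (hpi : PrefixIndependent G)
    (hdet : ∀ U : Set V, Determined (safetyGame G U))
    (r r' : Ranking V) (hsound : Sound G r) (hupd : IsRiskUpdate G r r') :
    Sound G r' ∧ Refines r r' := by
  have hmem_risk : ∀ v n, r v = some n → n ∈ riskSet G r v := by
    intro v n hvn
    refine ⟨⟨v, hvn⟩, mem_W1_safety_of_mem ⟨n, le_refl n, hvn⟩⟩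
  constructor
  · -- soundness of r'
    intro v
    constructor
    · intro h0
      have hleast := (hupd v 0).mp h0
      have h1 : v ∈ W1 (safetyGame G {w | ∃ m, m ≤ 0 ∧ r w = some m}) := hleast.1.2
      have hU : {w | ∃ m, m ≤ 0 ∧ r w = some m} = W1 G := by
        ext w
        simp only [Set.mem_setOf_eq, Nat.le_zero]
        constructor
        · rintro ⟨m, rfl, hm⟩; exact (hsound w).mp hm
        · intro hw; exact ⟨0, rfl, (hsound w).mpr hw⟩
      rw [hU] at h1
      exact W1_safety_subset G hpi h1
    · intro hv
      have hr0 : r v = some 0 := (hsound v).mpr hv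
      refine (hupd v 0).mpr ⟨hmem_risk v 0 hr0, fun k _ => Nat.zero_le k⟩
  · -- refinement
    intro v n hvn
    have hne : (riskSet G r v).Nonempty := ⟨n, hmem_risk v n hvn⟩
    refine ⟨sInf (riskSet G r v), (hupd v _).mpr ⟨Nat.sInf_mem hne,
      fun b hb => Nat.sInf_le hb⟩, Nat.sInf_le (hmem_risk v n hvn)⟩

end GamesWithDisturbances
end
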